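/- For every positive natural number L, define A(L) = Σ_j (-1)^j q^(2j²) [2L choose L-2j-1]_q. Then A(L) = (-q;q²)_{L-1} (1 - q^(2L)), i.e., A(L) equals ∏_{k=1}^{L-1}(1+q^(2k-1)) times (1-q^(2L)). -/

import Mathlib

/-!
Write `F_n(r) = ∑_j (-1)^j q^(2j²) [n, r-2j]` and `H_n(r) = ∑_j (-1)^j q^(2j(j+1)) [n, r-2j]`.
Multiplying the weight `(-1)^j q^(2j²)` by `q^(±2j)` gives the weight of `H` (up to a shift of `j`,
a sign and a power of `q`), and vice versa, so the two `q`-Pascal rules express row `n + 1` of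
`F` and `H` through row `n`. Starting from row `0`, where each sum has at most one term, induction
on `L` gives `F_{2L+1}(L) = (-q;q²)_L` and `H_{2L+1}(L-1) = -q^L (-q;q²)_L`; one more Pascal step
yields `F_{2L+2}(L) = (-q;q²)_L (1 - q^(2L+2))`, which is the claim for `L + 1`.
-/

open LaurentPolynomial Finset

noncomputable section

/-- Gaussian binomial coefficient with natural indices, in base `x`, defined by the
`q`-Pascal recurrence `[n+1, k+1] = [n, k] + x^(k+1) * [n, k+1]`.  It vanishes for `k > n`. -/
def gaussAux (x : LaurentPolynomial ℤ) : ℕ → ℕ → LaurentPolynomial ℤ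
  | _, 0 => 1
  | 0, _ + 1 => 0
  | n + 1, k + 1 => gaussAux x n k + x ^ (k + 1) * gaussAux x n (k + 1)

/-- The Gaussian binomial coefficient `[n choose k]` in base `x`, for integer indices:
it is zero when `n < 0` or `k < 0` (and, by `gaussAux`, also when `k > n`). -/
def qbin (x : LaurentPolynomial ℤ) (n k : ℤ) : LaurentPolynomial ℤ :=
  if 0 ≤ n ∧ 0 ≤ k then gaussAux x n.toNat k.toNat else 0

/-- `(-1)^j` for an integer `j`, as a Laurent polynomial. -/
def m1 (j : ℤ) : LaurentPolynomial ℤ := ((((-1 : ℤˣ) ^ j : ℤˣ) : ℤ) : LaurentPolynomial ℤ)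

lemma gaussAux_zero_right (x : ℤ[T;T⁻¹]) (n : ℕ) : gaussAux x n 0 = 1 := by
  cases n <;> rfl

lemma gaussAux_eq_zero_of_lt (x : ℤ[T;T⁻¹]) : ∀ {n k : ℕ}, n < k → gaussAux x n k = 0
  | _, 0, h => absurd h (Nat.not_lt_zero _)
  | 0, _ + 1, _ => rfl
  | n + 1, k + 1, h => by
    rw [gaussAux, gaussAux_eq_zero_of_lt x (by omega), gaussAux_eq_zero_of_lt x (by omega),
      mul_zero, add_zero]

lemma qbin_of_neg {x : ℤ[T;T⁻¹]} {n k : ℤ} (h : k < 0) : qbin x n k = 0 :=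
  if_neg (by omega)

lemma qbin_of_lt {x : ℤ[T;T⁻¹]} {n k : ℤ} (h : n < k) : qbin x n k = 0 := by
  unfold qbin
  split_ifs
  · exact gaussAux_eq_zero_of_lt x (by omega)
  · rfl

lemma qbin_natCast (x : ℤ[T;T⁻¹]) (n k : ℕ) : qbin x n k = gaussAux x n k := by
  simp [qbin]

lemma qbin_zero_left (x : ℤ[T;T⁻¹]) (k : ℤ) : qbin x 0 k = if k = 0 then 1 else 0 := by
  rcases lt_trichotomy k 0 with hk | rfl | hk
  · rw [qbin_of_neg hk, if_neg hk.ne]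
  · simp [qbin, gaussAux_zero_right]
  · rw [qbin_of_lt hk, if_neg hk.ne']

lemma qbin_succ (n : ℕ) (k : ℤ) :
    qbin (T 1) (n + 1) k = qbin (T 1) n (k - 1) + T k * qbin (T 1) n k := by
  rcases lt_trichotomy k 0 with hk | rfl | hk
  · simp [qbin_of_neg hk, qbin_of_neg (show k - 1 < 0 by omega)]
  · simp [qbin, gaussAux_zero_right, show (0 : ℤ) ≤ n + 1 by omega]
  · obtain ⟨m, rfl⟩ : ∃ m : ℕ, k = m + 1 := ⟨(k - 1).toNat, by omega⟩
    have h := qbin_natCast (T 1) (n + 1) (m + 1)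
    push_cast at h
    rw [h, add_sub_cancel_right, qbin_natCast, ← Nat.cast_add_one, qbin_natCast, gaussAux, T_pow,
      mul_one]

lemma qbin_succ' (n : ℕ) (k : ℤ) :
    qbin (T 1) (n + 1) k = T (n + 1 - k) * qbin (T 1) n (k - 1) + qbin (T 1) n k := by
  induction n generalizing k with
  | zero =>
    rw [qbin_succ, Nat.cast_zero, qbin_zero_left, qbin_zero_left]
    by_cases h1 : k = 1
    · simp [h1]
    by_cases h0 : k = 0
    · simp [h0]
    · simp [h0, sub_eq_zero, h1]
  | succ n ih =>
    push_cast
    calc qbin (T 1) (n + 1 + 1) k = qbin (T 1) (n + 1) (k - 1) + T k * qbin (T 1) (n + 1) k := by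
          exact_mod_cast qbin_succ (n + 1) k
      _ = T (n + 2 - k) * qbin (T 1) n (k - 2) + (1 + T (n + 1)) * qbin (T 1) n (k - 1)
          + T k * qbin (T 1) n k := by
          rw [ih, ih]
          simp only [mul_add, add_mul, ← mul_assoc, ← T_add]
          ring_nf
      _ = T (n + 1 + 1 - k) * qbin (T 1) (n + 1) (k - 1) + qbin (T 1) (n + 1) k := by
          rw [qbin_succ, qbin_succ]
          simp only [mul_add, add_mul, ← mul_assoc, ← T_add]
          ring_nf

def qbinSum (w : ℤ → ℤ[T;T⁻¹]) (n : ℕ) (r : ℤ) : ℤ[T;T⁻¹] :=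
  ∑ᶠ j, w j * qbin (T 1) n (r - 2 * j)

section QBinSum

variable (w : ℤ → ℤ[T;T⁻¹]) (n : ℕ) (r : ℤ)

lemma hasFiniteSupport_qbinSum :
    Function.HasFiniteSupport fun j => w j * qbin (T 1) n (r - 2 * j) := by
  refine ((Set.finite_Icc 0 (n : ℤ)).preimage (f := fun j => r - 2 * j)
    (fun a _ b _ h => by simp_all)).subset fun j hj => ?_
  by_contra hj'
  rw [Set.mem_preimage, Set.mem_Icc, not_and_or, not_le, not_le] at hj'
  rcases hj' with h | h
  · exact hj (by simp [qbin_of_neg h])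
  · exact hj (by simp [qbin_of_lt h])

lemma qbinSum_const_mul (c : ℤ[T;T⁻¹]) : qbinSum (fun j => c * w j) n r = c * qbinSum w n r := by
  simp only [qbinSum, mul_assoc, mul_finsum]

lemma qbinSum_neg : qbinSum (fun j => -w j) n r = -qbinSum w n r := by
  simp only [qbinSum, neg_mul, finsum_neg_distrib]

lemma qbinSum_comp_add (t : ℤ) : qbinSum (fun j => w (j + t)) n r = qbinSum w n (r + 2 * t) := by
  rw [qbinSum, qbinSum, ← finsum_comp_equiv (Equiv.addRight t)
    (f := fun j => w j * qbin (T 1) n (r + 2 * t - 2 * j))]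
  refine finsum_congr fun j => ?_
  rw [Equiv.coe_addRight]
  ring_nf

lemma qbinSum_succ :
    qbinSum w (n + 1) r = qbinSum w n (r - 1) + T r * qbinSum (fun j => T (-2 * j) * w j) n r := by
  rw [← qbinSum_const_mul, qbinSum, qbinSum, qbinSum, ← finsum_add_distrib
    (hasFiniteSupport_qbinSum _ _ _) (hasFiniteSupport_qbinSum _ _ _)]
  refine finsum_congr fun j => ?_
  rw [Nat.cast_add_one, qbin_succ, T_sub]
  ring_nf

lemma qbinSum_succ' :
    qbinSum w (n + 1) r =
      T (n + 1 - r) * qbinSum (fun j => T (2 * j) * w j) n (r - 1) + qbinSum w n r := by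
  rw [← qbinSum_const_mul, qbinSum, qbinSum, qbinSum, ← finsum_add_distrib
    (hasFiniteSupport_qbinSum _ _ _) (hasFiniteSupport_qbinSum _ _ _)]
  refine finsum_congr fun j => ?_
  rw [Nat.cast_add_one, qbin_succ', show (n : ℤ) + 1 - (r - 2 * j) = n + 1 - r + 2 * j by ring,
    T_add]
  ring_nf

lemma qbinSum_zero_even (i : ℤ) : qbinSum w 0 (2 * i) = w i := by
  rw [qbinSum, finsum_eq_single _ i fun j hj => ?_]
  · simp [qbin_zero_left]
  · simp [qbin_zero_left, sub_eq_zero, hj.symm]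

lemma qbinSum_zero_odd (i : ℤ) : qbinSum w 0 (2 * i + 1) = 0 :=
  finsum_eq_zero_of_forall_eq_zero fun j => by simp [qbin_zero_left]; omega

end QBinSum

lemma m1_add_one (j : ℤ) : m1 (j + 1) = -m1 j := by
  simp [m1, zpow_add_one]

def sqWeight (j : ℤ) : ℤ[T;T⁻¹] := m1 j * T (2 * j ^ 2)

def pronicWeight (j : ℤ) : ℤ[T;T⁻¹] := m1 j * T (2 * j * (j + 1))

lemma T_neg_two_mul_sqWeight (j : ℤ) : T (-2 * j) * sqWeight j = -pronicWeight (j + -1) := by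
  obtain ⟨i, rfl⟩ : ∃ i, j = i + 1 := ⟨j - 1, by ring⟩
  rw [sqWeight, pronicWeight, add_neg_cancel_right, m1_add_one, mul_left_comm, ← T_add]
  ring_nf

lemma T_two_mul_sqWeight (j : ℤ) : T (2 * j) * sqWeight j = pronicWeight j := by
  rw [sqWeight, pronicWeight, mul_left_comm, ← T_add]
  ring_nf

lemma T_neg_two_mul_pronicWeight (j : ℤ) : T (-2 * j) * pronicWeight j = sqWeight j := by
  rw [sqWeight, pronicWeight, mul_left_comm, ← T_add]
  ring_nf

lemma T_two_mul_pronicWeight (j : ℤ) :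
    T (2 * j) * pronicWeight j = -(T (-2) * sqWeight (j + 1)) := by
  rw [sqWeight, pronicWeight, m1_add_one, neg_mul, mul_neg, neg_neg, mul_left_comm, ← T_add,
    mul_left_comm, ← T_add]
  ring_nf

section Recurrences

variable (n : ℕ) (r : ℤ)

lemma qbinSum_sqWeight_succ :
    qbinSum sqWeight (n + 1) r =
      qbinSum sqWeight n (r - 1) - T r * qbinSum pronicWeight n (r - 2) := by
  rw [qbinSum_succ, funext T_neg_two_mul_sqWeight, qbinSum_neg, qbinSum_comp_add,
    show r + 2 * -1 = r - 2 by ring]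
  ring

lemma qbinSum_sqWeight_succ' :
    qbinSum sqWeight (n + 1) r =
      T (n + 1 - r) * qbinSum pronicWeight n (r - 1) + qbinSum sqWeight n r := by
  rw [qbinSum_succ', funext T_two_mul_sqWeight]

lemma qbinSum_pronicWeight_succ :
    qbinSum pronicWeight (n + 1) r =
      qbinSum pronicWeight n (r - 1) + T r * qbinSum sqWeight n r := by
  rw [qbinSum_succ, funext T_neg_two_mul_pronicWeight]

lemma qbinSum_pronicWeight_succ' :
    qbinSum pronicWeight (n + 1) r =
      qbinSum pronicWeight n r - T (n - 1 - r) * qbinSum sqWeight n (r + 1) := by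
  rw [qbinSum_succ', funext T_two_mul_pronicWeight, qbinSum_neg, qbinSum_const_mul,
    qbinSum_comp_add, show r - 1 + 2 * 1 = r + 1 by ring,
    show (n : ℤ) - 1 - r = n + 1 - r + -2 by ring, T_add]
  ring

end Recurrences

/-- The paper's `(-q;q²)_m`. -/
def oddPoch (m : ℕ) : ℤ[T;T⁻¹] := ∏ k ∈ Icc 1 m, (1 + T (2 * (k : ℤ) - 1))

lemma oddPoch_succ (m : ℕ) : oddPoch (m + 1) = oddPoch m * (1 + T (2 * m + 1)) := by
  rw [oddPoch, oddPoch, prod_Icc_succ_top (by omega)]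
  push_cast
  ring_nf

lemma qbinSum_even_row (L : ℕ) {f : ℤ[T;T⁻¹]} (hf : qbinSum sqWeight (2 * L + 1) L = f)
    (hh : qbinSum pronicWeight (2 * L + 1) (L - 1) = -(T L * f)) :
    qbinSum sqWeight (2 * L + 2) L = f * (1 - T (2 * L + 2)) ∧
      qbinSum sqWeight (2 * L + 2) (L + 1) = f * (1 + T (2 * L + 1)) ∧
      qbinSum pronicWeight (2 * L + 2) L = 0 ∧
      qbinSum pronicWeight (2 * L + 2) (L - 1) = -(T L * (1 + T 1) * f) := by
  refine ⟨?_, ?_, ?_, ?_⟩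
  · rw [qbinSum_sqWeight_succ', hh, hf, mul_neg, ← mul_assoc, ← T_add]
    push_cast
    ring_nf
  · rw [qbinSum_sqWeight_succ, add_sub_cancel_right, show (L : ℤ) + 1 - 2 = L - 1 by ring, hh, hf,
      mul_neg, ← mul_assoc, ← T_add]
    ring_nf
  · rw [qbinSum_pronicWeight_succ, hh, hf]
    ring
  · rw [qbinSum_pronicWeight_succ', sub_add_cancel, hh, hf, mul_add, mul_one, ← T_add]
    push_cast
    ring_nf

lemma qbinSum_odd_row (L : ℕ) :
    qbinSum sqWeight (2 * L + 1) L = oddPoch L ∧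
      qbinSum pronicWeight (2 * L + 1) (L - 1) = -(T L * oddPoch L) := by
  induction L with
  | zero =>
    constructor
    · rw [qbinSum_sqWeight_succ', Nat.cast_zero, zero_sub, show (-1 : ℤ) = 2 * -1 + 1 by norm_num,
        qbinSum_zero_odd, show (0 : ℤ) = 2 * 0 by norm_num, qbinSum_zero_even]
      simp [sqWeight, oddPoch, m1]
    · rw [qbinSum_pronicWeight_succ, Nat.cast_zero, zero_sub,
        show (-1 - 1 : ℤ) = 2 * -1 by norm_num, qbinSum_zero_even, show (-1 : ℤ) = 2 * -1 + 1 by norm_num, qbinSum_zero_odd]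
      simp [pronicWeight, oddPoch, m1]
  | succ L ih =>
    obtain ⟨hA, hB, hC, hD⟩ := qbinSum_even_row L ih.1 ih.2
    rw [show 2 * (L + 1) + 1 = 2 * L + 2 + 1 by ring, oddPoch_succ]
    push_cast
    constructor
    · rw [qbinSum_sqWeight_succ', add_sub_cancel_right, hB, hC, mul_zero, zero_add]
    · rw [add_sub_cancel_right, qbinSum_pronicWeight_succ, hD, hA,
        show (2 * L + 2 : ℤ) = 1 + (2 * L + 1) by ring, T_add 1, T_add (L : ℤ) 1]
      ring

theorem stmt4_general (L : ℕ) :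
    (∑ᶠ j : ℤ, m1 j * T (2 * j ^ 2) * qbin (T 1) (2 * L) (L - 2 * j - 1)) =
      (∏ k ∈ Finset.Icc 1 (L - 1), (1 + T (2 * (k : ℤ) - 1))) * (1 - T (2 * L)) := by
  have hsum : (∑ᶠ j : ℤ, m1 j * T (2 * j ^ 2) * qbin (T 1) (2 * L) (L - 2 * j - 1)) =
      qbinSum sqWeight (2 * L) (L - 1) :=
    finsum_congr fun j => by
      rw [sqWeight]
      push_cast
      ring_nf
  rw [hsum, ← oddPoch]
  rcases L with _ | L
  · rw [Nat.cast_zero, zero_sub, show (-1 : ℤ) = 2 * -1 + 1 by norm_num, qbinSum_zero_odd]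
    simp
  · rw [show 2 * (L + 1) = 2 * L + 2 by ring, Nat.add_sub_cancel, Nat.cast_add_one,
      add_sub_cancel_right, (qbinSum_even_row L (qbinSum_odd_row L).1 (qbinSum_odd_row L).2).1]
    ring_nf

theorem stmt4 (L : ℕ) (hL : 0 < L) :
    (∑ᶠ j : ℤ, m1 j * T (2 * j ^ 2) * qbin (T 1) (2 * L) (L - 2 * j - 1)) =
      (∏ k ∈ Finset.Icc 1 (L - 1), (1 + T (2 * (k : ℤ) - 1))) * (1 - T (2 * L)) :=
  stmt4_general L
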